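/- arXiv:1805.00533 — 5 statements merged into one kernel-verified Lean document; each statement's English description precedes it below -/
import Mathlib

section
/- ∫₀^∞ t e^{-t²/2} Φ(ρt/√(1-ρ²)) dt = (1+ρ)/2, where Φ is the standard normal CDF and -1 < ρ < 1. -/
/-!
With `b = √(1 - ρ²)`, the function `G t = ρ Φ(t/b) - e^{-t²/2} Φ(ρt/b)` is an antiderivative of the
integrand: the two terms involving the density cancel because
`t²/2 + (ρt/b)²/2 = (t/b)²/2`. Hence the integral is `G(∞) - G(0) = ρ - (ρ - 1)/2`.
-/

open MeasureTheory Real Filter Set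

noncomputable def Phi (x : ℝ) : ℝ :=
  ∫ s in Set.Iic x, (1 / Real.sqrt (2 * Real.pi)) * Real.exp (-s ^ 2 / 2)

noncomputable def stdPdf (x : ℝ) : ℝ := (1 / Real.sqrt (2 * Real.pi)) * Real.exp (-x ^ 2 / 2)

noncomputable def phi2 (ρ x y : ℝ) : ℝ :=
  (1 / (2 * Real.pi * Real.sqrt (1 - ρ ^ 2))) *
    Real.exp (-(x ^ 2 - 2 * ρ * x * y + y ^ 2) / (2 * (1 - ρ ^ 2)))

noncomputable def sg (x : ℝ) : ℝ := if 0 ≤ x then 1 else -1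

open Topology ProbabilityTheory

lemma stdPdf_eq_gaussianPDFReal : stdPdf = gaussianPDFReal 0 1 := by
  ext x
  simp [stdPdf, gaussianPDFReal]

lemma stdPdf_nonneg (x : ℝ) : 0 ≤ stdPdf x := by
  rw [stdPdf_eq_gaussianPDFReal]
  exact gaussianPDFReal_nonneg 0 1 x

lemma continuous_stdPdf : Continuous stdPdf := by
  unfold stdPdf
  fun_prop

lemma integrable_stdPdf : Integrable stdPdf := by
  rw [stdPdf_eq_gaussianPDFReal]
  exact integrable_gaussianPDFReal 0 1

lemma integral_stdPdf : ∫ x, stdPdf x = 1 := by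
  rw [stdPdf_eq_gaussianPDFReal]
  exact integral_gaussianPDFReal_eq_one 0 one_ne_zero

lemma Phi_eq_setIntegral_stdPdf (x : ℝ) : Phi x = ∫ s in Iic x, stdPdf s := rfl

lemma Phi_nonneg (x : ℝ) : 0 ≤ Phi x :=
  setIntegral_nonneg measurableSet_Iic fun s _ => stdPdf_nonneg s

lemma Phi_le_one (x : ℝ) : Phi x ≤ 1 := by
  rw [Phi_eq_setIntegral_stdPdf, ← integral_stdPdf]
  exact setIntegral_le_integral integrable_stdPdf (Eventually.of_forall stdPdf_nonneg)

lemma Phi_add_setIntegral_Ioi (x : ℝ) : Phi x + ∫ s in Ioi x, stdPdf s = 1 := by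
  rw [Phi_eq_setIntegral_stdPdf, intervalIntegral.integral_Iic_add_Ioi
    integrable_stdPdf.integrableOn integrable_stdPdf.integrableOn, integral_stdPdf]

lemma Phi_eq_add_intervalIntegral (x : ℝ) : Phi x = Phi 0 + ∫ s in (0 : ℝ)..x, stdPdf s := by
  rw [Phi_eq_setIntegral_stdPdf, Phi_eq_setIntegral_stdPdf,
    ← intervalIntegral.integral_Iic_sub_Iic integrable_stdPdf.integrableOn
      integrable_stdPdf.integrableOn]
  ring

lemma Phi_zero : Phi 0 = 1 / 2 := by
  have h_symm : ∫ s in Ioi (0 : ℝ), stdPdf s = Phi 0 := by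
    rw [Phi_eq_setIntegral_stdPdf, ← neg_zero, ← integral_comp_neg_Ioi]
    simp [stdPdf]
  linarith [Phi_add_setIntegral_Ioi 0]

lemma hasDerivAt_Phi (x : ℝ) : HasDerivAt Phi (stdPdf x) x := by
  rw [funext Phi_eq_add_intervalIntegral]
  exact (intervalIntegral.integral_hasDerivAt_right (continuous_stdPdf.intervalIntegrable _ _)
    (continuous_stdPdf.stronglyMeasurableAtFilter _ _) continuous_stdPdf.continuousAt).const_add _

lemma continuous_Phi : Continuous Phi :=
  continuous_iff_continuousAt.2 fun x => (hasDerivAt_Phi x).continuousAt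

lemma tendsto_Phi_atTop : Tendsto Phi atTop (𝓝 1) := by
  have h := (intervalIntegral_tendsto_integral_Ioi 0 integrable_stdPdf.integrableOn
    tendsto_id).const_add (Phi 0)
  rw [Phi_add_setIntegral_Ioi] at h
  exact h.congr fun x => (Phi_eq_add_intervalIntegral x).symm

lemma integrable_mul_exp_mul_Phi_comp {f : ℝ → ℝ} (hf : Measurable f) :
    Integrable fun t => t * exp (-t ^ 2 / 2) * Phi (f t) := by
  have h_gauss : Integrable fun t : ℝ => t * exp (-t ^ 2 / 2) :=
    (integrable_mul_exp_neg_mul_sq (by norm_num : (0 : ℝ) < 2⁻¹)).congr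
      (Eventually.of_forall fun t => by ring_nf)
  refine h_gauss.mul_bdd (c := 1) (continuous_Phi.measurable.comp hf).aestronglyMeasurable
    (Eventually.of_forall fun t => ?_)
  rw [norm_of_nonneg (Phi_nonneg _)]
  exact Phi_le_one _

lemma tendsto_exp_neg_sq_div_two_atTop : Tendsto (fun t : ℝ => exp (-t ^ 2 / 2)) atTop (𝓝 0) :=
  tendsto_exp_atBot.comp <| by
    simpa only [Function.comp_def, neg_div] using tendsto_neg_atTop_atBot.comp
      ((tendsto_pow_atTop two_ne_zero).atTop_div_const two_pos)

lemma exp_mul_stdPdf_div {ρ b : ℝ} (hb : b ≠ 0) (hρb : ρ ^ 2 + b ^ 2 = 1) (t : ℝ) :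
    exp (-t ^ 2 / 2) * stdPdf (ρ * t / b) = stdPdf (t / b) := by
  unfold stdPdf
  rw [mul_left_comm, ← exp_add]
  congr 2
  field_simp
  linear_combination (-t ^ 2) * hρb

noncomputable def gaussPrimitive (ρ b t : ℝ) : ℝ :=
  ρ * Phi (t / b) - exp (-t ^ 2 / 2) * Phi (ρ * t / b)

lemma hasDerivAt_gaussPrimitive {ρ b : ℝ} (hb : b ≠ 0) (hρb : ρ ^ 2 + b ^ 2 = 1) (t : ℝ) :
    HasDerivAt (gaussPrimitive ρ b) (t * exp (-t ^ 2 / 2) * Phi (ρ * t / b)) t := by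
  have h_exp : HasDerivAt (fun t : ℝ => exp (-t ^ 2 / 2)) (-t * exp (-t ^ 2 / 2)) t := by
    refine ((hasDerivAt_pow 2 t).neg.div_const 2).exp.congr_deriv ?_
    simp only [Pi.neg_apply]
    ring
  have h_Phi (c : ℝ) : HasDerivAt (fun t : ℝ => Phi (c * t / b)) (c / b * stdPdf (c * t / b)) t := by
    refine ((hasDerivAt_Phi (c * t / b)).comp t
      (((hasDerivAt_id t).const_mul c).div_const b)).congr_deriv ?_
    ring
  have h := ((h_Phi 1).const_mul ρ).sub (h_exp.mul (h_Phi ρ))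
  simp only [one_mul] at h
  refine h.congr_deriv ?_
  rw [← exp_mul_stdPdf_div hb hρb]
  ring

lemma tendsto_gaussPrimitive_atTop {ρ b : ℝ} (hb : 0 < b) :
    Tendsto (gaussPrimitive ρ b) atTop (𝓝 ρ) := by
  have h_decay : Tendsto (fun t => exp (-t ^ 2 / 2) * Phi (ρ * t / b)) atTop (𝓝 0) :=
    squeeze_zero (fun t => mul_nonneg (exp_pos _).le (Phi_nonneg _))
      (fun t => mul_le_of_le_one_right (exp_pos _).le (Phi_le_one _))
      tendsto_exp_neg_sq_div_two_atTop
  have h := ((tendsto_Phi_atTop.comp (tendsto_id.atTop_div_const hb)).const_mul ρ).sub h_decay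
  rw [mul_one, sub_zero] at h
  exact h

lemma integral_Ioi_mul_exp_mul_Phi {ρ b : ℝ} (hb : 0 < b) (hρb : ρ ^ 2 + b ^ 2 = 1) :
    ∫ t in Ioi (0 : ℝ), t * exp (-t ^ 2 / 2) * Phi (ρ * t / b) = (1 + ρ) / 2 := by
  rw [integral_Ioi_of_hasDerivAt_of_tendsto'
    (fun t _ => hasDerivAt_gaussPrimitive hb.ne' hρb t)
    (integrable_mul_exp_mul_Phi_comp (by fun_prop)).integrableOn
    (tendsto_gaussPrimitive_atTop hb)]
  simp only [gaussPrimitive, zero_div, mul_zero, Phi_zero]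
  norm_num
  ring

theorem stmt0 (ρ : ℝ) (h1 : -1 < ρ) (h2 : ρ < 1) :
    ∫ t in Set.Ioi (0 : ℝ), t * Real.exp (-t ^ 2 / 2) * Phi (ρ * t / Real.sqrt (1 - ρ ^ 2))
      = (1 + ρ) / 2 := by
  have h_pos : 0 < 1 - ρ ^ 2 := by nlinarith
  refine integral_Ioi_mul_exp_mul_Phi (sqrt_pos.2 h_pos) ?_
  rw [sq_sqrt h_pos.le]
  ring
end

section
/- For β > 0, ∫₀^∞ √x · erfc(√x) · e^{-βx} dx = (1/√π)·(arctan(√β)/β^{3/2} − 1/(β(1+β))). -/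
open MeasureTheory Real Filter Set

noncomputable def erfc (t : ℝ) : ℝ := (2 / Real.sqrt Real.pi) * ∫ s in Set.Ioi t, Real.exp (-s ^ 2)

/-!
The integrand has an explicit primitive. Differentiating `-√x erfc(√x) e^{-βx} / β` gives back the
integrand together with `-erfc(√x) e^{-βx} / (2β√x)` and `e^{-(1+β)x} / (β√π)`. The second is
cancelled by `e^{-(1+β)x} / (β√π(1+β))`; the first by `-owenTail β √x / (β√π)`, since
`owenTail β t = ∫_1^∞ e^{-t²(β+u²)} / (β+u²) du` has `t`-derivative `-√π e^{-βt²} erfc t`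
(substitute `s = tu` in the differentiated integral). The primitive vanishes at infinity, and at `0`
it only involves `owenTail β 0 = ∫_1^∞ du / (β+u²) = arctan √β / √β`.
-/
open Topology

theorem hasDerivAt_integral_Ioi {E : Type*} [NormedAddCommGroup E] [NormedSpace ℝ E]
    [CompleteSpace E] {f : ℝ → E} (hf : Integrable f) (hc : Continuous f) (t : ℝ) :
    HasDerivAt (fun a => ∫ x in Ioi a, f x) (-f t) t := by
  have hsplit : (fun a => ∫ x in Ioi a, f x) = fun a => (∫ x in Ioi 0, f x) - ∫ x in 0..a, f x := by
    funext a
    rw [← intervalIntegral.integral_interval_add_Ioi hf.integrableOn hf.integrableOn,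
      intervalIntegral.integral_symm]
    abel
  rw [hsplit, ← zero_sub]
  exact (hasDerivAt_const t _).sub
    (intervalIntegral.integral_hasDerivAt_right (hc.intervalIntegrable _ _)
      (hc.stronglyMeasurableAtFilter _ _) hc.continuousAt)

theorem integrable_exp_neg_sq : Integrable fun s : ℝ => exp (-s ^ 2) := by
  simpa using integrable_exp_neg_mul_sq one_pos

theorem integral_Ioi_exp_neg_sq (t : ℝ) :
    ∫ s in Ioi t, exp (-s ^ 2) = √π / 2 * erfc t := by
  have : √π ≠ 0 := (sqrt_pos.2 pi_pos).ne'
  rw [erfc]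
  field_simp

theorem hasDerivAt_erfc (t : ℝ) : HasDerivAt erfc (-(2 / √π) * exp (-t ^ 2)) t := by
  rw [neg_mul, ← mul_neg]
  exact (hasDerivAt_integral_Ioi integrable_exp_neg_sq (by fun_prop) t).const_mul _

theorem continuous_erfc : Continuous erfc :=
  continuous_iff_continuousAt.2 fun t => (hasDerivAt_erfc t).continuousAt

theorem erfc_nonneg (t : ℝ) : 0 ≤ erfc t :=
  mul_nonneg (by positivity) (setIntegral_nonneg measurableSet_Ioi fun _ _ => (exp_pos _).le)

theorem erfc_le_two (t : ℝ) : erfc t ≤ 2 := by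
  have hπ : 0 < √π := sqrt_pos.2 pi_pos
  have htail : ∫ s in Ioi t, exp (-s ^ 2) ≤ √π :=
    calc ∫ s in Ioi t, exp (-s ^ 2)
        ≤ ∫ s, exp (-s ^ 2) :=
          setIntegral_le_integral integrable_exp_neg_sq (.of_forall fun _ => (exp_pos _).le)
      _ = √π := by simpa using integral_gaussian 1
  rw [integral_Ioi_exp_neg_sq] at htail
  nlinarith

section InvAddSq

variable {β : ℝ}

theorem inv_add_sq_eq (hβ : 0 < β) (u : ℝ) :
    (β + u ^ 2)⁻¹ = β⁻¹ * (1 + ((√β)⁻¹ * u) ^ 2)⁻¹ := by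
  rw [mul_pow, inv_pow, sq_sqrt hβ.le, ← mul_inv]
  field_simp

theorem integrable_inv_add_sq (hβ : 0 < β) : Integrable fun u : ℝ => (β + u ^ 2)⁻¹ := by
  simp_rw [inv_add_sq_eq hβ]
  exact (integrable_inv_one_add_sq.comp_mul_left' (inv_ne_zero (sqrt_pos.2 hβ).ne')).const_mul _

theorem integral_Ioi_one_inv_add_sq (hβ : 0 < β) :
    ∫ u in Ioi 1, (β + u ^ 2)⁻¹ = arctan √β / √β := by
  have hb : 0 < √β := sqrt_pos.2 hβ
  simp_rw [inv_add_sq_eq hβ]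
  rw [integral_const_mul, integral_comp_mul_left_Ioi (fun v => (1 + v ^ 2)⁻¹) 1 (inv_pos.2 hb),
    integral_Ioi_inv_one_add_sq, mul_one, arctan_inv_of_pos hb, smul_eq_mul, inv_inv]
  field_simp
  rw [sq_sqrt hβ.le]
  ring

end InvAddSq

theorem integrable_exp_neg_mul_add_sq {b : ℝ} (hb : 0 < b) (β : ℝ) :
    Integrable fun u : ℝ => exp (-b * (β + u ^ 2)) := by
  have hsplit : ∀ u : ℝ, exp (-b * (β + u ^ 2)) = exp (-b * β) * exp (-b * u ^ 2) := by
    intro u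
    rw [← exp_add]
    ring_nf
  simp_rw [hsplit]
  exact (integrable_exp_neg_mul_sq hb).const_mul _

theorem norm_neg_two_mul_mul_exp_le {t x c : ℝ} (hc : 0 ≤ c) (hx : x ∈ Metric.ball t (t / 2)) :
    ‖-2 * x * exp (-x ^ 2 * c)‖ ≤ 3 * t * exp (-(t / 2) ^ 2 * c) := by
  rw [Metric.mem_ball, Real.dist_eq, abs_sub_lt_iff] at hx
  have hx0 : 0 < x := by linarith
  have hsq : (t / 2) ^ 2 ≤ x ^ 2 := by nlinarith
  have hexp : exp (-x ^ 2 * c) ≤ exp (-(t / 2) ^ 2 * c) := exp_le_exp.2 (by nlinarith)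
  rw [norm_mul, norm_mul, norm_neg, Real.norm_two, Real.norm_of_nonneg hx0.le,
    Real.norm_of_nonneg (exp_pos _).le]
  nlinarith [exp_pos (-x ^ 2 * c)]

/-- Up to rescaling (`u = √β y`), the tail `∫_{1/√β}^∞` of the integral defining Owen's
T-function. -/
noncomputable def owenTail (β t : ℝ) : ℝ :=
  ∫ u in Ioi 1, exp (-t ^ 2 * (β + u ^ 2)) / (β + u ^ 2)

section OwenTail

variable {β : ℝ}

theorem continuous_owenTail_integrand (hβ : 0 < β) (t : ℝ) :
    Continuous fun u : ℝ => exp (-t ^ 2 * (β + u ^ 2)) / (β + u ^ 2) :=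
  Continuous.div (by fun_prop) (by fun_prop) fun u => by positivity

theorem owenTail_integrand_le (hβ : 0 < β) (t u : ℝ) :
    exp (-t ^ 2 * (β + u ^ 2)) / (β + u ^ 2) ≤ exp (-β * t ^ 2) * (β + u ^ 2)⁻¹ := by
  rw [div_eq_mul_inv]
  exact mul_le_mul_of_nonneg_right (exp_le_exp.2 (by nlinarith [sq_nonneg (t * u)]))
    (by positivity)

theorem norm_owenTail_integrand_le (hβ : 0 < β) (t u : ℝ) :
    ‖exp (-t ^ 2 * (β + u ^ 2)) / (β + u ^ 2)‖ ≤ (β + u ^ 2)⁻¹ := by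
  rw [Real.norm_of_nonneg (by positivity)]
  refine (owenTail_integrand_le hβ t u).trans (mul_le_of_le_one_left (by positivity) ?_)
  exact exp_le_one_iff.2 (by nlinarith [sq_nonneg t])

theorem integrableOn_owenTail_integrand (hβ : 0 < β) (t : ℝ) :
    IntegrableOn (fun u : ℝ => exp (-t ^ 2 * (β + u ^ 2)) / (β + u ^ 2)) (Ioi 1) :=
  (integrable_inv_add_sq hβ).integrableOn.mono'
    (continuous_owenTail_integrand hβ t).aestronglyMeasurable
    (.of_forall (norm_owenTail_integrand_le hβ t))

theorem owenTail_zero (hβ : 0 < β) : owenTail β 0 = arctan √β / √β := by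
  simp [owenTail, ← integral_Ioi_one_inv_add_sq hβ, div_eq_mul_inv]

theorem continuous_owenTail (hβ : 0 < β) : Continuous (owenTail β) :=
  continuous_of_dominated (fun t => (continuous_owenTail_integrand hβ t).aestronglyMeasurable)
    (fun t => .of_forall (norm_owenTail_integrand_le hβ t))
    (integrable_inv_add_sq hβ).integrableOn (.of_forall fun u => by fun_prop)

theorem owenTail_nonneg (hβ : 0 < β) (t : ℝ) : 0 ≤ owenTail β t :=
  setIntegral_nonneg measurableSet_Ioi fun u _ => by positivity

theorem owenTail_le (hβ : 0 < β) (t : ℝ) :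
    owenTail β t ≤ exp (-β * t ^ 2) * (arctan √β / √β) := by
  rw [← integral_Ioi_one_inv_add_sq hβ, ← integral_const_mul]
  exact setIntegral_mono (integrableOn_owenTail_integrand hβ t)
    ((integrable_inv_add_sq hβ).integrableOn.const_mul _) (owenTail_integrand_le hβ t)

theorem tendsto_owenTail_atTop (hβ : 0 < β) : Tendsto (owenTail β) atTop (𝓝 0) := by
  have hexp : Tendsto (fun t : ℝ => exp (-β * t ^ 2)) atTop (𝓝 0) :=
    tendsto_exp_atBot.comp
      ((tendsto_pow_atTop two_ne_zero).const_mul_atTop_of_neg (neg_lt_zero.2 hβ))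
  refine tendsto_of_tendsto_of_tendsto_of_le_of_le tendsto_const_nhds
    (by simpa using hexp.mul_const (arctan √β / √β)) (owenTail_nonneg hβ) (owenTail_le hβ)

theorem integral_Ioi_one_neg_two_mul_exp_neg_sq_mul {t : ℝ} (ht : 0 < t) :
    ∫ u in Ioi 1, -2 * t * exp (-t ^ 2 * (β + u ^ 2)) = -√π * exp (-β * t ^ 2) * erfc t := by
  have hsplit : ∀ u : ℝ,
      -2 * t * exp (-t ^ 2 * (β + u ^ 2)) = -2 * t * exp (-β * t ^ 2) * exp (-(t * u) ^ 2) := by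
    intro u
    rw [mul_assoc _ (exp _), ← exp_add]
    ring_nf
  simp_rw [hsplit]
  rw [integral_const_mul, integral_comp_mul_left_Ioi (fun s => exp (-s ^ 2)) 1 ht, mul_one,
    integral_Ioi_exp_neg_sq, smul_eq_mul]
  field_simp

theorem hasDerivAt_owenTail (hβ : 0 < β) {t : ℝ} (ht : 0 < t) :
    HasDerivAt (owenTail β) (-√π * exp (-β * t ^ 2) * erfc t) t := by
  rw [← integral_Ioi_one_neg_two_mul_exp_neg_sq_mul ht]
  refine (hasDerivAt_integral_of_dominated_loc_of_deriv_le
    (F' := fun x u => -2 * x * exp (-x ^ 2 * (β + u ^ 2)))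
    (bound := fun u => 3 * t * exp (-(t / 2) ^ 2 * (β + u ^ 2)))
    (Metric.ball_mem_nhds t (half_pos ht))
    (.of_forall fun x => (continuous_owenTail_integrand hβ x).aestronglyMeasurable)
    (integrableOn_owenTail_integrand hβ t) (by fun_prop)
    (.of_forall fun u x hx => norm_neg_two_mul_mul_exp_le (by positivity) hx)
    ((integrable_exp_neg_mul_add_sq (by positivity) β).const_mul _).integrableOn
    (.of_forall fun u x _ => ?_)).2
  have hexponent : HasDerivAt (fun y : ℝ => -y ^ 2 * (β + u ^ 2)) (-2 * x * (β + u ^ 2)) x :=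
    ((hasDerivAt_pow 2 x).neg.mul_const _).congr_deriv (by simp)
  refine (hexponent.exp.div_const _).congr_deriv ?_
  field_simp

end OwenTail

noncomputable def sqrtErfcExpPrimitive (β x : ℝ) : ℝ :=
  -(√x * erfc √x * exp (-β * x) / β) - owenTail β √x / (β * √π)
    + exp (-(1 + β) * x) / (β * √π * (1 + β))

section Primitive

variable {β : ℝ}

theorem hasDerivAt_sqrtErfcExpPrimitive (hβ : 0 < β) {x : ℝ} (hx : 0 < x) :
    HasDerivAt (sqrtErfcExpPrimitive β) (√x * erfc √x * exp (-β * x)) x := by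
  have hsx : 0 < √x := sqrt_pos.2 hx
  have hsqrt : HasDerivAt (√·) (1 / (2 * √x)) x := hasDerivAt_sqrt hx.ne'
  have herfc := (hasDerivAt_erfc √x).comp x hsqrt
  have howen := (hasDerivAt_owenTail hβ hsx).comp x hsqrt
  have hexp : ∀ c : ℝ, HasDerivAt (fun y => exp (c * y)) (exp (c * x) * c) x := fun c => by
    simpa using ((hasDerivAt_id x).const_mul c).exp
  have h := (((hsqrt.mul herfc).mul (hexp (-β))).div_const β).neg.sub
    (howen.div_const (β * √π)) |>.add ((hexp (-(1 + β))).div_const (β * √π * (1 + β)))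
  refine h.congr_deriv ?_
  simp only [Function.comp_apply, Pi.mul_apply]
  rw [sq_sqrt hx.le, show -(1 + β) * x = -x + -β * x by ring, exp_add]
  field_simp
  ring

theorem continuous_sqrtErfcExpPrimitive (hβ : 0 < β) : Continuous (sqrtErfcExpPrimitive β) := by
  have := continuous_owenTail hβ
  have := continuous_erfc
  unfold sqrtErfcExpPrimitive
  fun_prop

theorem tendsto_sqrt_mul_erfc_sqrt_mul_exp (hβ : 0 < β) :
    Tendsto (fun x => √x * erfc √x * exp (-β * x)) atTop (𝓝 0) := by
  have hdom : Tendsto (fun x : ℝ => 2 * (x ^ (1 / 2 : ℝ) * exp (-β * x))) atTop (𝓝 0) := by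
    simpa using (tendsto_rpow_mul_exp_neg_mul_atTop_nhds_zero (1 / 2) β hβ).const_mul 2
  refine tendsto_of_tendsto_of_tendsto_of_le_of_le' tendsto_const_nhds hdom
    (.of_forall fun x => mul_nonneg (mul_nonneg (sqrt_nonneg x) (erfc_nonneg _)) (exp_pos _).le) ?_
  filter_upwards [eventually_ge_atTop 0] with x hx
  rw [← sqrt_eq_rpow]
  nlinarith [erfc_le_two √x, mul_nonneg (sqrt_nonneg x) (exp_pos (-β * x)).le]

theorem tendsto_sqrtErfcExpPrimitive_atTop (hβ : 0 < β) :
    Tendsto (sqrtErfcExpPrimitive β) atTop (𝓝 0) := by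
  have hexp : Tendsto (fun x : ℝ => exp (-(1 + β) * x)) atTop (𝓝 0) :=
    tendsto_exp_atBot.comp (tendsto_id.const_mul_atTop_of_neg (by linarith))
  have h := ((tendsto_sqrt_mul_erfc_sqrt_mul_exp hβ).div_const β).neg.sub
    (((tendsto_owenTail_atTop hβ).comp tendsto_sqrt_atTop).div_const (β * √π))
    |>.add (hexp.div_const (β * √π * (1 + β)))
  rw [zero_div, zero_div, zero_div, neg_zero, sub_zero, add_zero] at h
  exact h

theorem sqrtErfcExpPrimitive_zero (hβ : 0 < β) :
    sqrtErfcExpPrimitive β 0 = -(arctan √β / √β / (β * √π)) + 1 / (β * √π * (1 + β)) := by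
  simp [sqrtErfcExpPrimitive, owenTail_zero hβ]

end Primitive

theorem stmt5 (β : ℝ) (hβ : 0 < β) :
    ∫ x in Set.Ioi (0 : ℝ), Real.sqrt x * erfc (Real.sqrt x) * Real.exp (-β * x)
      = (1 / Real.sqrt Real.pi) *
        (Real.arctan (Real.sqrt β) / β ^ ((3 : ℝ) / 2) - 1 / (β * (1 + β))) := by
  rw [integral_Ioi_of_hasDerivAt_of_nonneg (continuous_sqrtErfcExpPrimitive hβ).continuousWithinAt
    (fun x hx => hasDerivAt_sqrtErfcExpPrimitive hβ hx)
    (fun x _ => mul_nonneg (mul_nonneg (sqrt_nonneg x) (erfc_nonneg _)) (exp_pos _).le)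
    (tendsto_sqrtErfcExpPrimitive_atTop hβ), sqrtErfcExpPrimitive_zero hβ]
  have hpow : β ^ ((3 : ℝ) / 2) = β * √β := by
    rw [show (3 : ℝ) / 2 = 1 + 1 / 2 by norm_num, rpow_add hβ, rpow_one, ← sqrt_eq_rpow]
  have hsqrtβ : 0 < √β := sqrt_pos.2 hβ
  have hsqrtπ : 0 < √π := sqrt_pos.2 pi_pos
  rw [hpow]
  field_simp
  ring
end

section
/- If (X,Y) is bivariate normal with standard normal marginals and correlation ρ ∈ (-1,1), then E[sgn(X)·Y³] = (6ρ − 2ρ³)/√(2π). -/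
/-!
Given `X = x`, `Y` is normal with mean `ρ x` and variance `1 - ρ²`, so `E[Y³ | X = x]` is the
Gaussian third moment `(ρ x)³ + 3 ρ x (1 - ρ²)`. Multiplying by `sgn x` turns the odd powers of
`x` into `|x|` and `|x|³`, whose standard normal expectations `2 / √(2π)` and `4 / √(2π)` are
Gamma integrals on the half-line. Fubini applies because `φ(x, y; ρ)` is dominated by a multiple
of `exp (-(x² + y²) / 4)`.
-/

open MeasureTheory Real Filter Set

open scoped NNReal

namespace ProbabilityTheory

variable {μ : ℝ} {v : ℝ≥0}

lemma integrable_pow_gaussianReal (n : ℕ) : Integrable (fun x ↦ x ^ n) (gaussianReal μ v) :=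
  integrable_pow_of_mem_interior_integrableExpSet (X := id) (by simp) n

lemma integral_pow_odd_gaussianReal_zero (k : ℕ) :
    ∫ x, x ^ (2 * k + 1) ∂gaussianReal 0 v = 0 := by
  have h := integral_map (μ := gaussianReal 0 v) (φ := fun x : ℝ ↦ -x) (by fun_prop)
    (f := fun x : ℝ ↦ x ^ (2 * k + 1)) (by fun_prop)
  simp only [gaussianReal_map_neg, neg_zero, (odd_two_mul_add_one k).neg_pow, integral_neg] at h
  linarith

lemma integral_sq_gaussianReal_zero : ∫ x, x ^ 2 ∂gaussianReal 0 v = v := by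
  simpa [variance_eq_integral measurable_id'.aemeasurable] using
    variance_fun_id_gaussianReal (μ := 0) (v := v)

lemma integral_pow_three_gaussianReal : ∫ x, x ^ 3 ∂gaussianReal μ v = μ ^ 3 + 3 * μ * v := by
  have hmap : (gaussianReal 0 v).map (· + μ) = gaussianReal μ v := by
    simpa using gaussianReal_map_add_const (μ := 0) (v := v) μ
  rw [← hmap, integral_map (by fun_prop) (by fun_prop)]
  have hexpand : ∀ x : ℝ, (x + μ) ^ 3 = x ^ (2 * 1 + 1) + 3 * μ * x ^ 2 + 3 * μ ^ 2 * x + μ ^ 3 :=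
    fun x ↦ by ring
  have hp := integrable_pow_gaussianReal (μ := 0) (v := v)
  have h1 : Integrable (fun x : ℝ ↦ x) (gaussianReal 0 v) := by simpa using hp 1
  simp only [hexpand]
  rw [integral_add (by exact ((hp _).add ((hp 2).const_mul _)).add (h1.const_mul _))
      (integrable_const _), integral_add (by exact (hp _).add ((hp 2).const_mul _)) (h1.const_mul _),
    integral_add (hp _) ((hp 2).const_mul _), integral_const_mul, integral_const_mul,
    integral_pow_odd_gaussianReal_zero, integral_sq_gaussianReal_zero, integral_id_gaussianReal]
  simp only [zero_add, mul_zero, add_zero, integral_const, probReal_univ, smul_eq_mul, one_mul]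
  ring

end ProbabilityTheory

open ProbabilityTheory

lemma integrable_pow_mul_exp_neg_mul_sq {b : ℝ} (hb : 0 < b) (n : ℕ) :
    Integrable fun x : ℝ ↦ x ^ n * exp (-b * x ^ 2) := by
  simpa using integrable_rpow_mul_exp_neg_mul_sq hb (s := n) (by linarith [n.cast_nonneg (α := ℝ)])

lemma integral_Ioi_pow_odd_mul_exp_neg_sq_div_two (k : ℕ) :
    ∫ x in Ioi (0 : ℝ), x ^ (2 * k + 1) * exp (-x ^ 2 / 2) = 2 ^ k * k.factorial := by
  have h := integral_rpow_mul_exp_neg_mul_rpow two_pos (q := ((2 * k + 1 : ℕ) : ℝ))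
    (neg_one_lt_zero.trans_le (Nat.cast_nonneg _)) one_half_pos
  have hq : (-(((2 * k + 1 : ℕ) : ℝ) + 1) / 2) = -((k + 1 : ℕ) : ℝ) := by push_cast; ring
  have hΓ : ((((2 * k + 1 : ℕ) : ℝ) + 1) / 2) = ((k : ℝ) + 1) := by push_cast; ring
  rw [hq, hΓ, Gamma_nat_eq_factorial, rpow_neg (by norm_num), rpow_natCast] at h
  calc ∫ x in Ioi (0 : ℝ), x ^ (2 * k + 1) * exp (-x ^ 2 / 2)
      = ∫ x in Ioi (0 : ℝ), x ^ ((2 * k + 1 : ℕ) : ℝ) * exp (-(1 / 2) * x ^ (2 : ℝ)) := by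
        simp only [rpow_natCast, rpow_two]
        ring_nf
    _ = 2 ^ k * k.factorial := by
        rw [h, one_div, inv_pow, inv_inv]
        ring

lemma measurable_sg : Measurable sg :=
  Measurable.ite measurableSet_Ici measurable_const measurable_const

lemma norm_sg_le_one (x : ℝ) : ‖sg x‖ ≤ 1 := by
  unfold sg; split_ifs <;> simp

lemma integrable_sg_mul {α : Type*} [MeasurableSpace α] {μ : Measure α} {f : α → ℝ} {g : α → ℝ}
    (hg : Measurable g) (hf : Integrable f μ) : Integrable (fun a ↦ sg (g a) * f a) μ :=
  hf.bdd_mul (measurable_sg.comp hg).aestronglyMeasurable (ae_of_all _ fun _ ↦ norm_sg_le_one _)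

lemma sg_mul_pow_odd (x : ℝ) (k : ℕ) : sg x * x ^ (2 * k + 1) = |x| ^ (2 * k + 1) := by
  rcases le_or_gt 0 x with hx | hx
  · simp [sg, hx, abs_of_nonneg hx]
  · simp [sg, hx.not_ge, abs_of_neg hx, (odd_two_mul_add_one k).neg_pow]

lemma integrable_pow_mul_stdPdf (n : ℕ) : Integrable fun x ↦ x ^ n * stdPdf x := by
  refine ((integrable_pow_mul_exp_neg_mul_sq one_half_pos n).const_mul (1 / √(2 * π))).congr
    (ae_of_all _ fun x ↦ ?_)
  simp only [stdPdf]
  ring_nf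

lemma integral_sg_mul_pow_odd_mul_stdPdf (k : ℕ) :
    ∫ x, sg x * (x ^ (2 * k + 1) * stdPdf x) = 2 ^ (k + 1) * k.factorial / √(2 * π) := by
  have habs : ∀ x, sg x * (x ^ (2 * k + 1) * stdPdf x)
      = (√(2 * π))⁻¹ * (|x| ^ (2 * k + 1) * exp (-|x| ^ 2 / 2)) := fun x ↦ by
    rw [← mul_assoc, sg_mul_pow_odd, stdPdf, sq_abs]; ring
  simp_rw [habs]
  rw [integral_comp_abs (f := fun x ↦ (√(2 * π))⁻¹ * (x ^ (2 * k + 1) * exp (-x ^ 2 / 2))),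
    integral_const_mul, integral_Ioi_pow_odd_mul_exp_neg_sq_div_two]
  ring

lemma phi2_eq_stdPdf_mul_gaussianPDFReal {ρ : ℝ} (hρ : ρ ^ 2 < 1) (x y : ℝ) :
    phi2 ρ x y = stdPdf x * gaussianPDFReal (ρ * x) (1 - ρ ^ 2).toNNReal y := by
  have hσ : 0 < 1 - ρ ^ 2 := by linarith
  rw [gaussianPDFReal_def, Real.coe_toNNReal _ hσ.le, phi2, stdPdf,
    sqrt_mul (by positivity : (0 : ℝ) ≤ 2 * π), mul_mul_mul_comm, ← exp_add, one_div, one_div,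
    ← mul_inv, ← mul_assoc, mul_self_sqrt (by positivity)]
  congr 2
  field_simp
  ring

lemma integral_pow_three_mul_phi2 {ρ : ℝ} (hρ : ρ ^ 2 < 1) (x : ℝ) :
    ∫ y, y ^ 3 * phi2 ρ x y = stdPdf x * ((ρ * x) ^ 3 + 3 * (ρ * x) * (1 - ρ ^ 2)) := by
  have hσ : (1 - ρ ^ 2).toNNReal ≠ 0 := by simpa using hρ
  simp_rw [phi2_eq_stdPdf_mul_gaussianPDFReal hρ, mul_left_comm _ (stdPdf x), integral_const_mul,
    mul_comm _ (gaussianPDFReal _ _ _), ← smul_eq_mul (gaussianPDFReal _ _ _),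
    ← integral_gaussianReal_eq_integral_smul hσ, integral_pow_three_gaussianReal,
    Real.coe_toNNReal _ (by linarith : 0 ≤ 1 - ρ ^ 2)]

lemma phi2_le {ρ : ℝ} (hρ : ρ ^ 2 < 1) (x y : ℝ) :
    phi2 ρ x y ≤ 1 / (2 * π * √(1 - ρ ^ 2)) * (exp (-(1 / 4) * x ^ 2) * exp (-(1 / 4) * y ^ 2)) := by
  have hσ : 0 < 1 - ρ ^ 2 := by linarith
  rw [phi2, ← exp_add]
  gcongr
  rw [div_le_iff₀ (by positivity)]
  -- `2 (x² - 2ρxy + y²) - (1 - ρ²)(x² + y²) = (x - ρy)² + (y - ρx)²`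
  nlinarith [sq_nonneg (x - ρ * y), sq_nonneg (y - ρ * x)]

lemma integrable_pow_mul_phi2 {ρ : ℝ} (hρ : ρ ^ 2 < 1) (n : ℕ) :
    Integrable (fun p : ℝ × ℝ ↦ p.2 ^ n * phi2 ρ p.1 p.2) (volume.prod volume) := by
  have hquarter : (0 : ℝ) < 1 / 4 := by norm_num
  have hdom := ((integrable_exp_neg_mul_sq hquarter).mul_prod
    (integrable_pow_mul_exp_neg_mul_sq hquarter n)).const_mul (1 / (2 * π * √(1 - ρ ^ 2)))
  refine hdom.mono (by unfold phi2; fun_prop) (ae_of_all _ fun ⟨x, y⟩ ↦ ?_)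
  have hphi2 : 0 ≤ phi2 ρ x y := by unfold phi2; positivity
  simp only [norm_mul, norm_pow, Real.norm_eq_abs, abs_of_nonneg hphi2, abs_exp,
    abs_of_nonneg (by positivity : 0 ≤ 1 / (2 * π * √(1 - ρ ^ 2)))]
  calc |y| ^ n * phi2 ρ x y
      ≤ |y| ^ n * (1 / (2 * π * √(1 - ρ ^ 2)) * (exp (-(1 / 4) * x ^ 2) * exp (-(1 / 4) * y ^ 2))) :=
        by gcongr; exact phi2_le hρ x y
    _ = _ := by ring

theorem stmt7 (ρ : ℝ) (h1 : -1 < ρ) (h2 : ρ < 1) :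
    ∫ p : ℝ × ℝ, sg p.1 * p.2 ^ 3 * phi2 ρ p.1 p.2
      = (6 * ρ - 2 * ρ ^ 3) / Real.sqrt (2 * Real.pi) := by
  have hρ : ρ ^ 2 < 1 := by nlinarith
  have hint := integrable_sg_mul measurable_fst (integrable_pow_mul_phi2 hρ 3)
  have hodd (k : ℕ) : Integrable fun x ↦ sg x * (x ^ (2 * k + 1) * stdPdf x) :=
    integrable_sg_mul measurable_id (integrable_pow_mul_stdPdf _)
  calc ∫ p : ℝ × ℝ, sg p.1 * p.2 ^ 3 * phi2 ρ p.1 p.2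
      = ∫ x, sg x * ∫ y, y ^ 3 * phi2 ρ x y := by
        simp_rw [Measure.volume_eq_prod, mul_assoc, integral_prod _ hint, integral_const_mul]
    _ = ∫ x, ρ ^ 3 * (sg x * (x ^ (2 * 1 + 1) * stdPdf x))
          + 3 * ρ * (1 - ρ ^ 2) * (sg x * (x ^ (2 * 0 + 1) * stdPdf x)) := by
        congr with x
        rw [integral_pow_three_mul_phi2 hρ]
        ring
    _ = (6 * ρ - 2 * ρ ^ 3) / √(2 * π) := by
        rw [integral_add ((hodd 1).const_mul _) ((hodd 0).const_mul _), integral_const_mul,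
          integral_const_mul, integral_sg_mul_pow_odd_mul_stdPdf, integral_sg_mul_pow_odd_mul_stdPdf]
        simp only [Nat.factorial_zero, Nat.factorial_one, Nat.cast_one]
        ring
end

section
/- Define V_s(ρ) = 2(arctan(√(1-ρ²)/ρ) − ρ√(1-ρ²)) − (1−ρ)² for ρ ∈ (0,1). Then as ρ → 1⁻, V_s(ρ) = (8√2/3)·(1−ρ)^{3/2} + o((1−ρ)^{3/2}). -/
open MeasureTheory Real Filter Set

/-!
For `ρ > 0` the arctangent term is `arccos ρ`, and `arccos ρ - ρ √(1 - ρ²)` has derivative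
`-2 √(1 - ρ²)`. Hence `V_s' ρ = 2 (1 - ρ) - 4 √(1 - ρ) √(1 + ρ)`, while `(1 - ρ)^{3/2}` has
derivative `-(3/2) √(1 - ρ)`. Both vanish at `ρ = 1`, and the ratio of the derivatives is
`(8 √(1 + ρ) - 4 √(1 - ρ)) / 3 → 8√2/3`, so l'Hôpital's rule applies.
-/

open Topology

theorem hasDerivAt_arccos_sub_mul_sqrt {x : ℝ} (h₁ : -1 < x) (h₂ : x < 1) :
    HasDerivAt (fun y => arccos y - y * √(1 - y ^ 2)) (-2 * √(1 - x ^ 2)) x := by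
  have hpos : 0 < 1 - x ^ 2 := by nlinarith
  have hsqrt : HasDerivAt (fun y => √(1 - y ^ 2)) (-x / √(1 - x ^ 2)) x := by
    refine (((hasDerivAt_pow 2 x).const_sub 1).sqrt hpos.ne').congr_deriv ?_
    ring
  refine ((hasDerivAt_arccos h₁.ne' h₂.ne).fun_sub
    ((hasDerivAt_id' x).fun_mul hsqrt)).congr_deriv ?_
  have hs : √(1 - x ^ 2) ^ 2 = 1 - x ^ 2 := sq_sqrt hpos.le
  field_simp
  linear_combination hs

theorem hasDerivAt_one_sub_rpow_three_halves (x : ℝ) :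
    HasDerivAt (fun y => (1 - y) ^ (3 / 2 : ℝ)) (-(3 / 2) * √(1 - x)) x := by
  refine (((hasDerivAt_id' x).const_sub 1).rpow_const (p := 3 / 2)
    (Or.inr (by norm_num))).congr_deriv ?_
  rw [sqrt_eq_rpow]
  norm_num

theorem tendsto_arccos_variance_div_rpow :
    Tendsto (fun x : ℝ => (2 * (arccos x - x * √(1 - x ^ 2)) - (1 - x) ^ 2) /
      (1 - x) ^ (3 / 2 : ℝ)) (𝓝[<] 1) (𝓝 (8 * √2 / 3)) := by
  have hratio : Tendsto (fun x : ℝ => (2 * (1 - x) - 4 * √(1 - x ^ 2)) / (-(3 / 2) * √(1 - x)))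
      (𝓝[<] 1) (𝓝 (8 * √2 / 3)) := by
    have hcont : Tendsto (fun x : ℝ => (8 * √(1 + x) - 4 * √(1 - x)) / 3) (𝓝[<] 1)
        (𝓝 (8 * √2 / 3)) :=
      tendsto_nhdsWithin_of_tendsto_nhds (Continuous.tendsto' (by fun_prop) _ _ (by norm_num))
    refine hcont.congr' (eventually_nhdsWithin_of_forall fun x (hx : x < 1) => ?_)
    have hpos : 0 < 1 - x := by linarith
    have hs : √(1 - x) ^ 2 = 1 - x := sq_sqrt hpos.le
    have : √(1 - x) ≠ 0 := (sqrt_pos.2 hpos).ne'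
    dsimp only
    rw [show 1 - x ^ 2 = (1 - x) * (1 + x) by ring, sqrt_mul hpos.le]
    field_simp
    linear_combination -4 * hs
  have hIoo : Ioo (-1 : ℝ) 1 ∈ 𝓝[<] 1 := Ioo_mem_nhdsLT (by norm_num)
  refine HasDerivAt.lhopital_zero_nhdsLT ?_
    (Eventually.of_forall hasDerivAt_one_sub_rpow_three_halves) ?_ ?_ ?_ hratio
  · filter_upwards [hIoo] with x hx
    refine (((hasDerivAt_arccos_sub_mul_sqrt hx.1 hx.2).const_mul 2).fun_sub
      (((hasDerivAt_id' x).const_sub 1).fun_pow 2)).congr_deriv ?_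
    ring
  · filter_upwards [self_mem_nhdsWithin] with x (hx : x < 1)
    have : 0 < √(1 - x) := sqrt_pos.2 (by linarith)
    positivity
  · exact tendsto_nhdsWithin_of_tendsto_nhds (Continuous.tendsto' (by fun_prop) _ _ (by simp))
  · exact tendsto_nhdsWithin_of_tendsto_nhds
      (Continuous.tendsto' (by fun_prop (disch := norm_num)) _ _ (by simp))

theorem stmt17 :
    Filter.Tendsto
      (fun ρ : ℝ =>
        (2 * (Real.arctan (Real.sqrt (1 - ρ ^ 2) / ρ) - ρ * Real.sqrt (1 - ρ ^ 2)) - (1 - ρ) ^ 2) /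
          (1 - ρ) ^ ((3 : ℝ) / 2))
      (nhdsWithin 1 (Set.Iio 1)) (nhds (8 * Real.sqrt 2 / 3)) := by
  refine tendsto_arccos_variance_div_rpow.congr' ?_
  filter_upwards [Ioo_mem_nhdsLT (zero_lt_one' ℝ)] with ρ hρ
  rw [arccos_eq_arctan hρ.1]
end

section
/- With V₁(ρ) = arccos(ρ)(π − arccos(ρ))(1−ρ²) and V_s(ρ) = 2(arctan(√(1-ρ²)/ρ) − ρ√(1-ρ²)) − (1−ρ)², the ratio V_s(ρ)/V₁(ρ) converges to 4/(3π) as ρ → 1⁻. -/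
open MeasureTheory Real Filter Set

/-!
Substituting θ = arccos ρ turns √(1 - ρ²)/ρ into tan θ, so the ratio becomes
(2θ - sin 2θ - (1 - cos θ)²) / (θ (π - θ) sin² θ) with θ → 0⁺. By Taylor's formula the
numerator is 4θ³/3 + O(θ⁴), while the denominator is asymptotic to π θ³.
-/

open Asymptotics Topology

lemma abs_two_mul_sub_cos_mul_sin_sub_le {θ : ℝ} (hθ : |θ| ≤ 1 / 2) :
    |2 * (θ - cos θ * sin θ) - (1 - cos θ) ^ 2 - 4 / 3 * θ ^ 3| ≤ |θ| ^ 4 := by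
  have hsin := sin_bound (x := 2 * θ) (by rw [abs_mul, abs_two]; linarith)
  have hcos : 0 ≤ 1 - cos θ ∧ 1 - cos θ ≤ θ ^ 2 / 2 :=
    ⟨sub_nonneg.2 (cos_le_one θ), by linarith [one_sub_sq_div_two_le_cos (x := θ)]⟩
  have hsq : θ ^ 2 = |θ| ^ 2 := (sq_abs θ).symm
  rw [sin_two_mul, abs_mul, abs_two] at hsin
  have h5 : |θ| ^ 5 ≤ |θ| ^ 4 / 2 := by
    have := pow_le_pow_left₀ (abs_nonneg θ) hθ 1
    nlinarith [pow_nonneg (abs_nonneg θ) 4]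
  rw [abs_le] at hsin ⊢
  constructor <;> nlinarith [mul_le_mul hcos.2 hcos.2 hcos.1 (by positivity)]

lemma isEquivalent_two_mul_sub_cos_mul_sin :
    (fun θ : ℝ => 2 * (θ - cos θ * sin θ) - (1 - cos θ) ^ 2) ~[𝓝 0] fun θ => 4 / 3 * θ ^ 3 := by
  have hbigO : (fun θ : ℝ => 2 * (θ - cos θ * sin θ) - (1 - cos θ) ^ 2 - 4 / 3 * θ ^ 3)
      =O[𝓝 0] fun θ => θ ^ 4 := by
    refine IsBigO.of_bound 1 ?_
    filter_upwards [Metric.closedBall_mem_nhds (0 : ℝ) (by norm_num : (0 : ℝ) < 1 / 2)] with θ hθ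
    rw [Metric.mem_closedBall, dist_zero_right, norm_eq_abs] at hθ
    simpa [norm_eq_abs, abs_pow] using abs_two_mul_sub_cos_mul_sin_sub_le hθ
  exact hbigO.trans_isLittleO ((isLittleO_pow_pow (by norm_num : 3 < 4)).const_mul_right'
    (by norm_num : IsUnit (4 / 3 : ℝ)))

lemma isEquivalent_mul_pi_sub_mul_sin_sq :
    (fun θ : ℝ => θ * (π - θ) * sin θ ^ 2) ~[𝓝 0] fun θ => π * θ ^ 3 := by
  have hconst : (fun θ : ℝ => π - θ) ~[𝓝 0] Function.const ℝ π :=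
    (isEquivalent_const_iff_tendsto pi_ne_zero).2 <| by
      simpa using (continuous_const.sub continuous_id).tendsto (0 : ℝ) (f := fun θ : ℝ => π - θ)
  convert ((IsEquivalent.refl (u := id)).mul hconst).mul (isEquivalent_sin.pow 2) using 1
  · rfl
  · ext θ
    simp only [Pi.mul_apply, Pi.pow_apply, id, Function.const_apply]
    ring

lemma tendsto_ratio_nhdsGT_zero :
    Tendsto (fun θ : ℝ => (2 * (θ - cos θ * sin θ) - (1 - cos θ) ^ 2) / (θ * (π - θ) * sin θ ^ 2))
      (𝓝[>] 0) (𝓝 (4 / (3 * π))) := by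
  have h := (isEquivalent_two_mul_sub_cos_mul_sin.div isEquivalent_mul_pi_sub_mul_sin_sq).mono
    (nhdsWithin_le_nhds (s := Ioi 0))
  refine h.symm.tendsto_nhds (tendsto_const_nhds.congr' ?_)
  filter_upwards [self_mem_nhdsWithin] with θ (hθ : 0 < θ)
  simp only [Pi.div_apply]
  field_simp

lemma tendsto_arccos_nhdsLT_one : Tendsto arccos (𝓝[<] 1) (𝓝[>] 0) := by
  refine tendsto_nhdsWithin_of_tendsto_nhds_of_eventually_within _ ?_ ?_
  · simpa using continuous_arccos.continuousWithinAt (s := Iio 1) (x := 1) |>.tendsto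
  · filter_upwards [self_mem_nhdsWithin] with ρ (hρ : ρ < 1)
    exact arccos_pos.2 hρ

theorem stmt18 :
    Filter.Tendsto
      (fun ρ : ℝ =>
        (2 * (Real.arctan (Real.sqrt (1 - ρ ^ 2) / ρ) - ρ * Real.sqrt (1 - ρ ^ 2)) - (1 - ρ) ^ 2) /
          (Real.arccos ρ * (Real.pi - Real.arccos ρ) * (1 - ρ ^ 2)))
      (nhdsWithin 1 (Set.Iio 1)) (nhds (4 / (3 * Real.pi))) := by
  refine (tendsto_ratio_nhdsGT_zero.comp tendsto_arccos_nhdsLT_one).congr' ?_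
  filter_upwards [Ioo_mem_nhdsLT zero_lt_one] with ρ ⟨hρ₀, hρ₁⟩
  have hsin_sq : sin (arccos ρ) ^ 2 = 1 - ρ ^ 2 := by
    rw [sin_arccos, sq_sqrt (by nlinarith)]
  rw [Function.comp_apply, cos_arccos (by linarith) hρ₁.le, hsin_sq, sin_arccos,
    arccos_eq_arctan hρ₀]
end
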